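/- Let r > 2/3 and u ∈ (6/5, 4/3) with r + u − 2 > 0. Then the algebraic system of two equations 2 + μ = (1/2)·√(2D(r + 1/10))·(q_{f,+}(r) − 2q_{f,−}(r)) and u + μ = −(1/2)·√(2D(r + 1/10))·(q_{b,+}(r,u) − 2q_{b,−}(r,u)) has exactly one solution (D, μ) with D > 0, namely D = D_0(r,u) and μ = μ_0(r,u). -/

import Mathlib

/-!
Writing `A = q_{f,+} - 2 q_{f,-}` and `B = q_{b,+} - 2 q_{b,-}`, the two matching conditions are
linear in `s = √(2 D (r + 1/10))` and `μ`. Subtracting them gives `s (A + B) = 2 (2 - u)`, and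
`A + B = 3 √(r/(r + 1/10)) + 3 √((r + u - 2)/(r + 1/10)) - 2 > 0` because `r > 2/3` forces the
first root above `2/3`. Hence `s`, and with it `D = s² / (2 (r + 1/10))` and `μ`, are determined,
and the values so obtained solve the system.
-/

noncomputable section

/-- `q_{f,+}(r) = 1 + √(r/(r + 1/10))`. -/
def qfp (r : ℝ) : ℝ := 1 + Real.sqrt (r / (r + 1/10))

/-- `q_{f,−}(r) = 1 − √(r/(r + 1/10))`. -/
def qfm (r : ℝ) : ℝ := 1 - Real.sqrt (r / (r + 1/10))

/-- `q_{b,+}(r,u) = 1 + √((r + u − 2)/(r + 1/10))`. -/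
def qbp (r u : ℝ) : ℝ := 1 + Real.sqrt ((r + u - 2) / (r + 1/10))

/-- `q_{b,−}(r,u) = 1 − √((r + u − 2)/(r + 1/10))`. -/
def qbm (r u : ℝ) : ℝ := 1 - Real.sqrt ((r + u - 2) / (r + 1/10))

/-- The singular wave-speed parameter `μ_0(r,u)`. -/
def mu0 (r u : ℝ) : ℝ :=
  (2*(2*qbm r u - qbp r u) + u*(2*qfm r - qfp r)) /
    (qbp r u - 2*qbm r u + qfp r - 2*qfm r)

/-- The singular diffusion coefficient `D_0(r,u)`. -/
def D0 (r u : ℝ) : ℝ :=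
  2*(2 - u)^2 / ((r + 1/10) * (2*qbm r u - qbp r u + 2*qfm r - qfp r)^2)

section MatchingSystem

variable {c A B u D μ : ℝ}

def matchingD (c A B u : ℝ) : ℝ := 2 * (2 - u) ^ 2 / (c * (A + B) ^ 2)

def matchingMu (A B u : ℝ) : ℝ := -(2 * B + u * A) / (A + B)

theorem sqrt_two_mul_matchingD_mul (hc : 0 < c) (hAB : 0 < A + B) (hu : u ≤ 2) :
    √(2 * matchingD c A B u * c) = 2 * (2 - u) / (A + B) := by
  have hsq : 2 * matchingD c A B u * c = (2 * (2 - u) / (A + B)) ^ 2 := by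
    unfold matchingD
    field_simp
  rw [hsq, Real.sqrt_sq (div_nonneg (by linarith) hAB.le)]

theorem matchingD_pos (hc : 0 < c) (hAB : 0 < A + B) (hu : u < 2) : 0 < matchingD c A B u := by
  unfold matchingD
  have : 0 < 2 - u := by linarith
  positivity

theorem matching_conditions_of_matchingD (hc : 0 < c) (hAB : 0 < A + B) (hu : u ≤ 2) :
    2 + matchingMu A B u = (1/2) * √(2 * matchingD c A B u * c) * A ∧
    u + matchingMu A B u = -(1/2) * √(2 * matchingD c A B u * c) * B := by
  rw [sqrt_two_mul_matchingD_mul hc hAB hu, matchingMu]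
  constructor <;> field_simp <;> ring

theorem eq_matchingD_of_matching_conditions (hc : 0 < c) (hAB : 0 < A + B) (hD : 0 ≤ D)
    (hfront : 2 + μ = (1/2) * √(2 * D * c) * A)
    (hback : u + μ = -(1/2) * √(2 * D * c) * B) :
    D = matchingD c A B u ∧ μ = matchingMu A B u := by
  set s := √(2 * D * c)
  have hs : s ^ 2 = 2 * D * c := Real.sq_sqrt (by positivity)
  have hsum : s * (A + B) = 2 * (2 - u) := by linear_combination 2 * hback - 2 * hfront
  constructor
  · rw [matchingD, eq_div_iff (by positivity)]
    linear_combination (-(A + B) ^ 2 / 2) * hs + ((s * (A + B) + 2 * (2 - u)) / 2) * hsum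
  · rw [matchingMu, eq_div_iff hAB.ne']
    linear_combination (A + B) * hfront + (A / 2) * hsum

end MatchingSystem

theorem qfp_sub_two_mul_qfm (r : ℝ) : qfp r - 2 * qfm r = 3 * √(r / (r + 1/10)) - 1 := by
  unfold qfp qfm
  ring

theorem qbp_sub_two_mul_qbm (r u : ℝ) :
    qbp r u - 2 * qbm r u = 3 * √((r + u - 2) / (r + 1/10)) - 1 := by
  unfold qbp qbm
  ring

theorem D0_eq_matchingD (r u : ℝ) :
    D0 r u = matchingD (r + 1/10) (qfp r - 2 * qfm r) (qbp r u - 2 * qbm r u) u := by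
  unfold D0 matchingD
  ring

theorem mu0_eq_matchingMu (r u : ℝ) :
    mu0 r u = matchingMu (qfp r - 2 * qfm r) (qbp r u - 2 * qbm r u) u := by
  rw [mu0, matchingMu]
  congr 1 <;> ring

theorem two_thirds_lt_sqrt_div {r : ℝ} (hr : 2/3 < r) : 2/3 < √(r / (r + 1/10)) := by
  rw [Real.lt_sqrt (by norm_num), lt_div_iff₀ (by linarith)]
  linarith

theorem front_add_back_pos {r : ℝ} (u : ℝ) (hr : 2/3 < r) :
    0 < (qfp r - 2 * qfm r) + (qbp r u - 2 * qbm r u) := by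
  rw [qfp_sub_two_mul_qfm, qbp_sub_two_mul_qbm]
  linarith [two_thirds_lt_sqrt_div hr, Real.sqrt_nonneg ((r + u - 2) / (r + 1/10))]

theorem stmt8_general (r u : ℝ) (hr : 2/3 < r) (hu : u ∈ Set.Ioo (6/5 : ℝ) (4/3)) :
    (0 < D0 r u ∧
     2 + mu0 r u = (1/2) * Real.sqrt (2 * D0 r u * (r + 1/10)) * (qfp r - 2*qfm r) ∧
     u + mu0 r u = -(1/2) * Real.sqrt (2 * D0 r u * (r + 1/10)) * (qbp r u - 2*qbm r u)) ∧
    ∀ D μ : ℝ, 0 < D →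
      2 + μ = (1/2) * Real.sqrt (2*D*(r + 1/10)) * (qfp r - 2*qfm r) →
      u + μ = -(1/2) * Real.sqrt (2*D*(r + 1/10)) * (qbp r u - 2*qbm r u) →
      D = D0 r u ∧ μ = mu0 r u := by
  have hc : 0 < r + 1/10 := by linarith
  have hAB := front_add_back_pos u hr
  have hu2 : u < 2 := by linarith [hu.2]
  rw [D0_eq_matchingD, mu0_eq_matchingMu]
  exact ⟨⟨matchingD_pos hc hAB hu2, matching_conditions_of_matchingD hc hAB hu2.le⟩,
    fun D μ hD hfront hback => eq_matchingD_of_matching_conditions hc hAB hD.le hfront hback⟩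

theorem stmt8 (r u : ℝ) (hr : 2/3 < r) (hu : u ∈ Set.Ioo (6/5 : ℝ) (4/3))
    (hru : 0 < r + u - 2) :
    (0 < D0 r u ∧
     2 + mu0 r u = (1/2) * Real.sqrt (2 * D0 r u * (r + 1/10)) * (qfp r - 2*qfm r) ∧
     u + mu0 r u = -(1/2) * Real.sqrt (2 * D0 r u * (r + 1/10)) * (qbp r u - 2*qbm r u)) ∧
    ∀ D μ : ℝ, 0 < D →
      2 + μ = (1/2) * Real.sqrt (2*D*(r + 1/10)) * (qfp r - 2*qfm r) →
      u + μ = -(1/2) * Real.sqrt (2*D*(r + 1/10)) * (qbp r u - 2*qbm r u) →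
      D = D0 r u ∧ μ = mu0 r u :=
  stmt8_general r u hr hu
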